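/- The seven polynomials q1,…,q7 defined in the context are linearly independent over ℂ in ℂ[h1,h2], and their common zero locus in ℂ², i.e. {(a,b) ∈ ℂ × ℂ : qi(a,b) = 0 for all i = 1,…,7}, is exactly the single point {(0,0)}. -/
import Mathlib


open MvPolynomial

/- Polynomials in `ℂ[h1, h2]` (with `h1 = X 0`, `h2 = X 1`): the Chevalley projections of
explicit iterated adjoint-action brackets of negative root vectors with the image in
`S(G₂)` of the conformal-weight-6 singular vector of `V^{-2}(G₂)`. -/

noncomputable def QG1 : MvPolynomial (Fin 2) ℂ :=
  let h1 := (X 0 : MvPolynomial (Fin 2) ℂ); let h2 := (X 1 : MvPolynomial (Fin 2) ℂ);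
  -3*h1*h2*(h1 + h2)*(h1 + 2*h2)*(h1 + 3*h2)*(2*h1 + 3*h2)

noncomputable def QG2 : MvPolynomial (Fin 2) ℂ :=
  let h1 := (X 0 : MvPolynomial (Fin 2) ℂ); let h2 := (X 1 : MvPolynomial (Fin 2) ℂ);
  -24*(h1 + h2)*(h1 + 2*h2)*(2*h1 + 3*h2)^4

noncomputable def QG3 : MvPolynomial (Fin 2) ℂ :=
  let h1 := (X 0 : MvPolynomial (Fin 2) ℂ); let h2 := (X 1 : MvPolynomial (Fin 2) ℂ);
  4*(h1 + h2)*(h1 + 2*h2)*(h1 + 3*h2)*(2*h1 + 3*h2)^2*(4*h1 + 3*h2)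

noncomputable def QG4 : MvPolynomial (Fin 2) ℂ :=
  let h1 := (X 0 : MvPolynomial (Fin 2) ℂ); let h2 := (X 1 : MvPolynomial (Fin 2) ℂ);
  -4*(h1 + h2)^2*(h1 + 3*h2)^2*(16*h1^2 + 33*h2*h1 + 18*h2^2)

noncomputable def QG5 : MvPolynomial (Fin 2) ℂ :=
  let h1 := (X 0 : MvPolynomial (Fin 2) ℂ); let h2 := (X 1 : MvPolynomial (Fin 2) ℂ);
  4*h1*(h1 + h2)*(h1 + 2*h2)*(2*h1 + 3*h2)^2*(4*h1 + 9*h2)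

noncomputable def QG6 : MvPolynomial (Fin 2) ℂ :=
  let h1 := (X 0 : MvPolynomial (Fin 2) ℂ); let h2 := (X 1 : MvPolynomial (Fin 2) ℂ);
  -2*h1*(h1 + h2)*(h1 + 2*h2)*(h1 + 3*h2)*(16*h1^2 + 51*h2*h1 + 45*h2^2)

noncomputable def QG7 : MvPolynomial (Fin 2) ℂ :=
  let h1 := (X 0 : MvPolynomial (Fin 2) ℂ); let h2 := (X 1 : MvPolynomial (Fin 2) ℂ);
  -4*h1^2*(h1 + 2*h2)^2*(16*h1^2 + 63*h2*h1 + 63*h2^2)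

lemma evQ1 (x y : ℂ) : eval ![x,y] QG1 = -3*x*y*(x + y)*(x + 2*y)*(x + 3*y)*(2*x + 3*y) := by simp [QG1]
lemma evQ2 (x y : ℂ) : eval ![x,y] QG2 = -24*(x + y)*(x + 2*y)*(2*x + 3*y)^4 := by simp [QG2]
lemma evQ3 (x y : ℂ) : eval ![x,y] QG3 = 4*(x + y)*(x + 2*y)*(x + 3*y)*(2*x + 3*y)^2*(4*x + 3*y) := by simp [QG3]
lemma evQ4 (x y : ℂ) : eval ![x,y] QG4 = -4*(x + y)^2*(x + 3*y)^2*(16*x^2 + 33*y*x + 18*y^2) := by simp [QG4]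
lemma evQ5 (x y : ℂ) : eval ![x,y] QG5 = 4*x*(x + y)*(x + 2*y)*(2*x + 3*y)^2*(4*x + 9*y) := by simp [QG5]
lemma evQ6 (x y : ℂ) : eval ![x,y] QG6 = -2*x*(x + y)*(x + 2*y)*(x + 3*y)*(16*x^2 + 51*y*x + 45*y^2) := by simp [QG6]
lemma evQ7 (x y : ℂ) : eval ![x,y] QG7 = -4*x^2*(x + 2*y)^2*(16*x^2 + 63*y*x + 63*y^2) := by simp [QG7]


/-- The seven polynomials `QG1, …, QG7` are linearly independent over ℂ in `ℂ[h1, h2]`,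
and their common zero locus in ℂ² is exactly the single point `(0, 0)`; this is the key
step showing that the associated variety of `L_{-2}(G₂)` contains no nonzero semisimple
element, hence lies in the nilpotent cone. -/
theorem G2_chevalley_projections :
    LinearIndependent ℂ ![QG1, QG2, QG3, QG4, QG5, QG6, QG7] ∧
    {z : ℂ × ℂ | eval ![z.1, z.2] QG1 = 0 ∧ eval ![z.1, z.2] QG2 = 0 ∧
      eval ![z.1, z.2] QG3 = 0 ∧ eval ![z.1, z.2] QG4 = 0 ∧ eval ![z.1, z.2] QG5 = 0 ∧
      eval ![z.1, z.2] QG6 = 0 ∧ eval ![z.1, z.2] QG7 = 0} = {((0 : ℂ), (0 : ℂ))} := by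
  constructor
  · rw [Fintype.linearIndependent_iff]
    intro g hg
    rw [Fin.sum_univ_seven] at hg
    have hg2 : g 0 • QG1 + g 1 • QG2 + g 2 • QG3 + g 3 • QG4 + g 4 • QG5 + g 5 • QG6
        + g 6 • QG7 = 0 := hg
    have e1 : (0 : ℂ) * g 0 + (-384 : ℂ) * g 1 + (64 : ℂ) * g 2 + (-64 : ℂ) * g 3 + (64 : ℂ) * g 4 + (-32 : ℂ) * g 5 + (-64 : ℂ) * g 6 = 0 := by
      have h := congrArg (eval ![(1 : ℂ), (0 : ℂ)]) hg2
      simp only [map_add, map_zero, smul_eval, evQ1, evQ2, evQ3, evQ4, evQ5, evQ6, evQ7] at h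
      linear_combination h
    have e2 : (0 : ℂ) * g 0 + (-3888 : ℂ) * g 1 + (648 : ℂ) * g 2 + (-648 : ℂ) * g 3 + (0 : ℂ) * g 4 + (0 : ℂ) * g 5 + (0 : ℂ) * g 6 = 0 := by
      have h := congrArg (eval ![(0 : ℂ), (1 : ℂ)]) hg2
      simp only [map_add, map_zero, smul_eval, evQ1, evQ2, evQ3, evQ4, evQ5, evQ6, evQ7] at h
      linear_combination h
    have e3 : (-360 : ℂ) * g 0 + (-90000 : ℂ) * g 1 + (16800 : ℂ) * g 2 + (-17152 : ℂ) * g 3 + (7800 : ℂ) * g 4 + (-5376 : ℂ) * g 5 + (-5112 : ℂ) * g 6 = 0 := by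
      have h := congrArg (eval ![(1 : ℂ), (1 : ℂ)]) hg2
      simp only [map_add, map_zero, smul_eval, evQ1, evQ2, evQ3, evQ4, evQ5, evQ6, evQ7] at h
      linear_combination h
    have e4 : (0 : ℂ) * g 0 + (0 : ℂ) * g 1 + (0 : ℂ) * g 2 + (0 : ℂ) * g 3 + (0 : ℂ) * g 4 + (0 : ℂ) * g 5 + (-64 : ℂ) * g 6 = 0 := by
      have h := congrArg (eval ![(1 : ℂ), (-1 : ℂ)]) hg2
      simp only [map_add, map_zero, smul_eval, evQ1, evQ2, evQ3, evQ4, evQ5, evQ6, evQ7] at h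
      linear_combination h
    have e5 : (-2520 : ℂ) * g 0 + (-691488 : ℂ) * g 1 + (129360 : ℂ) * g 2 + (-133200 : ℂ) * g 3 + (79968 : ℂ) * g 4 + (-50640 : ℂ) * g 5 + (-64768 : ℂ) * g 6 = 0 := by
      have h := congrArg (eval ![(2 : ℂ), (1 : ℂ)]) hg2
      simp only [map_add, map_zero, smul_eval, evQ1, evQ2, evQ3, evQ4, evQ5, evQ6, evQ7] at h
      linear_combination h
    have e6 : (-5040 : ℂ) * g 0 + (-1474560 : ℂ) * g 1 + (268800 : ℂ) * g 2 + (-271656 : ℂ) * g 3 + (84480 : ℂ) * g 4 + (-62580 : ℂ) * g 5 + (-39400 : ℂ) * g 6 = 0 := by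
      have h := congrArg (eval ![(1 : ℂ), (2 : ℂ)]) hg2
      simp only [map_add, map_zero, smul_eval, evQ1, evQ2, evQ3, evQ4, evQ5, evQ6, evQ7] at h
      linear_combination h
    have e7 : (360 : ℂ) * g 0 + (-18432 : ℂ) * g 1 + (1920 : ℂ) * g 2 + (-2200 : ℂ) * g 3 + (-2688 : ℂ) * g 4 + (2820 : ℂ) * g 5 + (-5112 : ℂ) * g 6 = 0 := by
      have h := congrArg (eval ![(-1 : ℂ), (2 : ℂ)]) hg2
      simp only [map_add, map_zero, smul_eval, evQ1, evQ2, evQ3, evQ4, evQ5, evQ6, evQ7] at h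
      linear_combination h
    intro i
    fin_cases i
    · show g 0 = 0
      linear_combination ((-1439 : ℂ)/216) * e1 + ((-1921 : ℂ)/648) * e2 + ((-305 : ℂ)/324) * e3 + ((20 : ℂ)/243) * e4 + ((1051 : ℂ)/19440) * e5 + ((161 : ℂ)/3888) * e6 + ((127 : ℂ)/6480) * e7
    · show g 1 = 0
      linear_combination ((-287 : ℂ)/1152) * e1 + ((-1213 : ℂ)/5184) * e2 + ((-131 : ℂ)/2592) * e3 + ((-2219 : ℂ)/31104) * e4 + ((79 : ℂ)/31104) * e5 + ((79 : ℂ)/31104) * e6 + ((29 : ℂ)/10368) * e7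
    · show g 2 = 0
      linear_combination ((-557 : ℂ)/192) * e1 + ((-455 : ℂ)/162) * e2 + ((-133 : ℂ)/216) * e3 + ((-3839 : ℂ)/5184) * e4 + ((5 : ℂ)/162) * e5 + ((5 : ℂ)/162) * e6 + ((7 : ℂ)/216) * e7
    · show g 3 = 0
      linear_combination ((-45 : ℂ)/32) * e1 + ((-45 : ℂ)/32) * e2 + ((-5 : ℂ)/16) * e3 + ((-5 : ℂ)/16) * e4 + ((1 : ℂ)/64) * e5 + ((1 : ℂ)/64) * e6 + ((1 : ℂ)/64) * e7
    · show g 4 = 0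
      linear_combination ((217 : ℂ)/1728) * e1 + ((-839 : ℂ)/2592) * e2 + ((-43 : ℂ)/1296) * e3 + ((-1025 : ℂ)/3888) * e4 + ((13 : ℂ)/15552) * e5 + ((37 : ℂ)/15552) * e6 + ((31 : ℂ)/5184) * e7
    · show g 5 = 0
      linear_combination ((95 : ℂ)/432) * e1 + ((-835 : ℂ)/1296) * e2 + ((-43 : ℂ)/648) * e3 + ((-3857 : ℂ)/7776) * e4 + ((13 : ℂ)/7776) * e5 + ((37 : ℂ)/7776) * e6 + ((31 : ℂ)/2592) * e7
    · show g 6 = 0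
      linear_combination ((-1 : ℂ)/64) * e4
  · ext ⟨x, y⟩
    simp only [Set.mem_setOf_eq, Set.mem_singleton_iff, Prod.mk.injEq,
      evQ1, evQ2, evQ3, evQ4, evQ5, evQ6, evQ7]
    constructor
    · rintro ⟨h1, h2, h3, h4, h5, h6, h7⟩
      have h2' : (x + y) * ((x + 2*y) * (2*x + 3*y)^4) = 0 := by
        linear_combination (-1/24 : ℂ) * h2
      rcases mul_eq_zero.mp h2' with hA | h2''
      · have hy : y = -x := by linear_combination hA
        subst hy
        have hx6 : x^6 = 0 := by linear_combination (-1/64 : ℂ) * h7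
        have hx : x = 0 := by
          have := pow_eq_zero_iff (n := 6) (by norm_num) |>.mp hx6
          exact this
        subst hx; norm_num
      · rcases mul_eq_zero.mp h2'' with hB | hC
        · have hx : x = -2*y := by linear_combination hB
          subst hx
          have hy6 : y^6 = 0 := by linear_combination (-1/64 : ℂ) * h4
          have hy : y = 0 := pow_eq_zero_iff (n := 6) (by norm_num) |>.mp hy6
          subst hy; norm_num
        · have hC' : 2*x + 3*y = 0 := pow_eq_zero_iff (n := 4) (by norm_num) |>.mp hC
          have hy : y = -(2/3)*x := by linear_combination (1/3 : ℂ) * hC'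
          subst hy
          have hx6 : x^6 = 0 := by linear_combination (-9/8 : ℂ) * h4
          have hx : x = 0 := pow_eq_zero_iff (n := 6) (by norm_num) |>.mp hx6
          subst hx; norm_num
    · rintro ⟨rfl, rfl⟩
      norm_num
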